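/- arXiv:0705.3522 — 6 statements merged into one kernel-verified Lean document; each statement's English description precedes it below -/
import Mathlib

section
/- Let H be a Hopf algebra over a field K, let χ : H → K be a character (algebra homomorphism), let n be a natural number and z ∈ H. Then χ(h)^n · z = Σ h₍₁₎ z S(h₍₂₎) holds for every h ∈ H if and only if h·z = z·φ^n(h) holds for every h ∈ H, where φ : H → H is the map φ(h) = Σ χ(h₍₁₎) h₍₂₎. -/
open TensorProduct

section Defs

variable (K H : Type*) [CommRing K] [Ring H]

/-- The map `h ↦ Σ h₁ * z * S(h₂)` (adjoint-type action on `z`). -/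
noncomputable def sweedlerAd [HopfAlgebra K H] (z : H) : H →ₗ[K] H :=
  LinearMap.mul' K H ∘ₗ
    TensorProduct.map LinearMap.id
      (LinearMap.mulLeft K z ∘ₗ HopfAlgebra.antipode (R := K)) ∘ₗ Coalgebra.comul

/-- `φ(h) = Σ χ(h₁) h₂`. -/
noncomputable def phiMap [Bialgebra K H] (χ : H →ₐ[K] K) : H →ₗ[K] H :=
  (TensorProduct.lid K H).toLinearMap ∘ₗ
    TensorProduct.map χ.toLinearMap LinearMap.id ∘ₗ Coalgebra.comul

/-- `ψ(h) = Σ h₁ χ(h₂)`. -/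
noncomputable def psiMap [Bialgebra K H] (χ : H →ₐ[K] K) : H →ₗ[K] H :=
  (TensorProduct.rid K H).toLinearMap ∘ₗ
    TensorProduct.map LinearMap.id χ.toLinearMap ∘ₗ Coalgebra.comul

/-- `h ↦ Σ h₁ f(h₂)` for a linear functional `f`. -/
noncomputable def psiL [Bialgebra K H] (f : H →ₗ[K] K) : H →ₗ[K] H :=
  (TensorProduct.rid K H).toLinearMap ∘ₗ
    TensorProduct.map LinearMap.id f ∘ₗ Coalgebra.comul

/-- Convolution product of two linear functionals on a coalgebra. -/
noncomputable def conv [Bialgebra K H] (f g : H →ₗ[K] K) : H →ₗ[K] K :=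
  LinearMap.mul' K K ∘ₗ TensorProduct.map f g ∘ₗ Coalgebra.comul

/-- `n`-th convolution power of a linear functional, with unit the counit. -/
noncomputable def convPow [Bialgebra K H] (f : H →ₗ[K] K) : ℕ → (H →ₗ[K] K)
  | 0 => Coalgebra.counit
  | n + 1 => conv K H (convPow f n) f

/-- Group-like element of a bialgebra: `Δ(a) = a ⊗ a` and `ε(a) = 1`. -/
def IsGrouplike [Bialgebra K H] (a : H) : Prop :=
  Coalgebra.comul (R := K) a = a ⊗ₜ[K] a ∧ Coalgebra.counit (R := K) a = 1

/-- An ad-invariant integral on a Hopf algebra: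
`γ(1) = 1`, `Σ h₁ γ(h₂) = γ(h)·1`, and `Σ γ(h₁ x S(h₂)) = ε(h) γ(x)`. -/
def IsAdInvariantIntegral [HopfAlgebra K H] (γ : H →ₗ[K] K) : Prop :=
  γ 1 = 1 ∧ (∀ h : H, psiL K H γ h = γ h • (1 : H)) ∧
    ∀ h x : H, γ (sweedlerAd K H x h) = Coalgebra.counit (R := K) h * γ x

end Defs

/-- Gaussian (q-)binomial coefficient via the q-Pascal recursion
`binom(n+1,k+1)_q = binom(n,k)_q + q^(k+1) binom(n,k+1)_q`. -/
def qBinom {K : Type*} [CommRing K] (q : K) : ℕ → ℕ → K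
  | _, 0 => 1
  | 0, _ + 1 => 0
  | n + 1, k + 1 => qBinom q n k + q ^ (k + 1) * qBinom q n (k + 1)

/-! Only the functional `f = χⁿ` matters, through `φⁿ(h) = Σ f(h₁) h₂`. Coassociativity and the
antipode axioms give `h z = Σ (h₁ z S(h₂)) h₃` and `Σ φ_f(h₁) S(h₂) = f(h) · 1`; the first turns
`Σ h₁ z S(h₂) = f(h) z` into `h z = z φ_f(h)`, the second turns it back. -/

open Coalgebra HopfAlgebra

section

variable (K H : Type*) [CommRing K] [Ring H]

noncomputable def phiL [Bialgebra K H] (f : H →ₗ[K] K) : H →ₗ[K] H :=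
  (TensorProduct.lid K H).toLinearMap ∘ₗ
    TensorProduct.map f LinearMap.id ∘ₗ comul

variable {K H}

section Bialgebra

variable [Bialgebra K H]

lemma phiL_apply (f : H →ₗ[K] K) {ι : Type*} {h : H} (r : Repr K h ι) :
    phiL K H f h = ∑ i ∈ r.index, f (r.left i) • r.right i := by
  simp only [phiL, LinearMap.comp_apply, ← r.eq, map_sum, TensorProduct.map_tmul,
    LinearMap.id_coe, id_eq, LinearEquiv.coe_coe, TensorProduct.lid_tmul]

lemma conv_apply (f g : H →ₗ[K] K) {ι : Type*} {h : H} (r : Repr K h ι) :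
    conv K H f g h = ∑ i ∈ r.index, f (r.left i) * g (r.right i) := by
  simp only [conv, LinearMap.comp_apply, ← r.eq, map_sum, TensorProduct.map_tmul,
    LinearMap.mul'_apply]

lemma phiL_counit : phiL K H counit = LinearMap.id := by
  ext h
  rw [phiL_apply counit (ℛ K h), sum_counit_smul, LinearMap.id_apply]

lemma phiL_conv (f g : H →ₗ[K] K) :
    phiL K H (conv K H f g) = phiL K H g ∘ₗ phiL K H f := by
  ext h
  let r := ℛ K h
  let T : H ⊗[K] (H ⊗[K] H) →ₗ[K] H := (TensorProduct.lid K H).toLinearMap ∘ₗ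
    TensorProduct.map f ((TensorProduct.lid K H).toLinearMap ∘ₗ TensorProduct.map g .id)
  have coassoc := congrArg T
    (sum_tmul_tmul_eq r (fun i ↦ ℛ K (r.left i)) (fun i ↦ ℛ K (r.right i)))
  simp only [T, map_sum, LinearMap.comp_apply, TensorProduct.map_tmul, LinearMap.id_coe, id_eq,
    LinearEquiv.coe_coe, TensorProduct.lid_tmul, smul_smul] at coassoc
  rw [LinearMap.comp_apply, phiL_apply _ r, phiL_apply f r, map_sum]
  simp only [conv_apply f g (ℛ K _), Finset.sum_smul, coassoc, map_smul]
  simp only [phiL_apply g (ℛ K _), Finset.smul_sum, smul_smul]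

lemma phiMap_pow (χ : H →ₐ[K] K) (n : ℕ) :
    phiMap K H χ ^ n = phiL K H (convPow K H χ.toLinearMap n) := by
  induction n with
  | zero => exact phiL_counit.symm
  | succ n ih => rw [pow_succ', ih, convPow, phiL_conv]; rfl

end Bialgebra

variable [HopfAlgebra K H]

lemma sweedlerAd_apply (z : H) {ι : Type*} {h : H} (r : Repr K h ι) :
    sweedlerAd K H z h = ∑ i ∈ r.index, r.left i * (z * antipode K (r.right i)) := by
  simp only [sweedlerAd, LinearMap.comp_apply, ← r.eq, map_sum, TensorProduct.map_tmul,
    LinearMap.id_coe, id_eq, LinearMap.mul'_apply, LinearMap.mulLeft_apply]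

lemma sum_sweedlerAd_mul (z : H) {ι : Type*} {h : H} (r : Repr K h ι) :
    ∑ i ∈ r.index, sweedlerAd K H z (r.left i) * r.right i = h * z := by
  let T : H ⊗[K] (H ⊗[K] H) →ₗ[K] H := LinearMap.mul' K H ∘ₗ TensorProduct.map .id
    (LinearMap.mul' K H ∘ₗ TensorProduct.map (LinearMap.mulLeft K z ∘ₗ antipode K) .id)
  have coassoc := congrArg T
    (sum_tmul_tmul_eq r (fun i ↦ ℛ K (r.left i)) (fun i ↦ ℛ K (r.right i)))
  have counit_right := congrArg
    (LinearMap.mul' K H ∘ₗ TensorProduct.map .id (LinearMap.toSpanSingleton K H z))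
    (sum_tmul_counit_eq r)
  simp only [T, map_sum, LinearMap.comp_apply, TensorProduct.map_tmul, LinearMap.id_coe, id_eq,
    LinearMap.mul'_apply, LinearMap.mulLeft_apply, LinearMap.toSpanSingleton_apply,
    one_smul, mul_assoc, mul_smul_comm] at coassoc counit_right
  calc ∑ i ∈ r.index, sweedlerAd K H z (r.left i) * r.right i
      = ∑ i ∈ r.index, r.left i *
          (z * ∑ j ∈ (ℛ K (r.right i)).index,
            antipode K ((ℛ K (r.right i)).left j) * (ℛ K (r.right i)).right j) := by
        simp only [sweedlerAd_apply z (ℛ K _), Finset.sum_mul, coassoc, Finset.mul_sum, mul_assoc]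
    _ = h * z := by
        simp only [sum_antipode_mul_eq_smul, mul_smul_comm, mul_one, counit_right]

lemma sum_phiL_mul_antipode (f : H →ₗ[K] K) {ι : Type*} {h : H} (r : Repr K h ι) :
    ∑ i ∈ r.index, phiL K H f (r.left i) * antipode K (r.right i) = f h • 1 := by
  let T : H ⊗[K] (H ⊗[K] H) →ₗ[K] H := (TensorProduct.lid K H).toLinearMap ∘ₗ
    TensorProduct.map f (LinearMap.mul' K H ∘ₗ TensorProduct.map .id (antipode K))
  have coassoc := congrArg T
    (sum_tmul_tmul_eq r (fun i ↦ ℛ K (r.left i)) (fun i ↦ ℛ K (r.right i)))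
  have counit_right := congrArg (LinearMap.mul' K K ∘ₗ TensorProduct.map f .id)
    (sum_tmul_counit_eq r)
  simp only [T, map_sum, LinearMap.comp_apply, TensorProduct.map_tmul, LinearMap.id_coe, id_eq,
    LinearMap.mul'_apply, LinearEquiv.coe_coe, TensorProduct.lid_tmul, mul_one]
    at coassoc counit_right
  calc ∑ i ∈ r.index, phiL K H f (r.left i) * antipode K (r.right i)
      = ∑ i ∈ r.index, f (r.left i) • ∑ j ∈ (ℛ K (r.right i)).index,
          (ℛ K (r.right i)).left j * antipode K ((ℛ K (r.right i)).right j) := by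
        simp only [phiL_apply f (ℛ K _), Finset.sum_mul, smul_mul_assoc, coassoc, Finset.smul_sum]
    _ = f h • 1 := by
        simp only [sum_mul_antipode_eq_smul, smul_smul, ← Finset.sum_smul, counit_right]

theorem forall_smul_eq_sweedlerAd_iff (f : H →ₗ[K] K) (z : H) :
    (∀ h, f h • z = sweedlerAd K H z h) ↔ ∀ h, h * z = z * phiL K H f h := by
  constructor
  · intro hz h
    let r := ℛ K h
    simp only [← sum_sweedlerAd_mul z r, phiL_apply f r, Finset.mul_sum, ← hz, smul_mul_assoc,
      mul_smul_comm]
  · intro hz h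
    let r := ℛ K h
    calc f h • z = z * ∑ i ∈ r.index, phiL K H f (r.left i) * antipode K (r.right i) := by
          rw [sum_phiL_mul_antipode f r, mul_smul_comm, mul_one]
      _ = sweedlerAd K H z h := by
          rw [sweedlerAd_apply z r, Finset.mul_sum]
          exact Finset.sum_congr rfl fun i _ ↦ by rw [← mul_assoc, ← hz, mul_assoc]

end

/-- `χⁿ(h) • z = Σ h₁ z S(h₂)` for all `h` iff `h z = z φⁿ(h)` for all `h`. -/
theorem stmt0 (K H : Type*) [Field K] [Ring H] [HopfAlgebra K H]
    (χ : H →ₐ[K] K) (n : ℕ) (z : H) :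
    (∀ h : H, convPow K H χ.toLinearMap n h • z = sweedlerAd K H z h) ↔
      (∀ h : H, h * z = z * (phiMap K H χ ^ n) h) := by
  rw [phiMap_pow]
  exact forall_smul_eq_sweedlerAd_iff _ z
end

section
/- Let H be a Hopf algebra with an ad-invariant integral γ (so γ(1) = 1, Σ h₍₁₎ γ(h₍₂₎) = γ(h)·1, and Σ γ(h₍₁₎ x S(h₍₂₎)) = ε(h) γ(x) for all h, x ∈ H). Let (H, g, χ) be a Yetter-Drinfeld datum for a primitive N-th root of unity q, and assume g^N ≠ 1. Then the following are equivalent: (a) χ^N(h) · (1 − g^N) = Σ h₍₁₎ (1 − g^N) S(h₍₂₎) for every h ∈ H; (b) χ^N = ε and g^N lies in the center of H. -/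
open TensorProduct

/-!
Applying the ad-invariant integral `γ` to (a) gives `χᴺ(h) γ(1 - gᴺ) = ε(h) γ(1 - gᴺ)`, and
`γ(1 - gᴺ) = 1` because a left integral kills every group-like element other than `1`. So (a)
says `χᴺ = ε` together with `Σ h₁ z S(h₂) = ε(h) z` for `z = 1 - gᴺ`, and the latter identity
characterises the central elements of a Hopf algebra.
-/

open TensorProduct Coalgebra

section Bialgebra

variable {K H : Type*} [CommRing K] [Ring H] [Bialgebra K H]

theorem isGrouplike_iff_isGroupLikeElem {a : H} : IsGrouplike K H a ↔ IsGroupLikeElem K a := by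
  rw [IsGrouplike, isGroupLikeElem_iff, and_comm]

theorem IsGrouplike.pow {a : H} (ha : IsGrouplike K H a) (n : ℕ) : IsGrouplike K H (a ^ n) :=
  isGrouplike_iff_isGroupLikeElem.2 (isGrouplike_iff_isGroupLikeElem.1 ha).pow

end Bialgebra

theorem apply_eq_zero_of_isGrouplike {K H : Type*} [Field K] [Ring H] [Bialgebra K H]
    {γ : H →ₗ[K] K} (hγ : ∀ h : H, psiL K H γ h = γ h • (1 : H))
    {a : H} (ha : IsGrouplike K H a) (ha1 : a ≠ 1) : γ a = 0 := by
  have hsmul : γ a • a = γ a • (1 : H) := by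
    rw [← hγ a]
    simp [psiL, ha.1]
  by_contra hγa
  exact ha1 (smul_right_injective H hγa hsmul)

section HopfAlgebra

variable {K H : Type*} [CommRing K] [Ring H] [HopfAlgebra K H]

theorem sweedlerAd_apply_of_mem_center {z : H} (hz : z ∈ Set.center H) (h : H) :
    sweedlerAd K H z h = counit (R := K) h • z := by
  have hcore : (LinearMap.mul' K H ∘ₗ
      map LinearMap.id (LinearMap.mulLeft K z ∘ₗ HopfAlgebra.antipode (R := K)) :
        H ⊗[K] H →ₗ[K] H) =
      LinearMap.mulRight K z ∘ₗ LinearMap.mul' K H ∘ₗ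
        LinearMap.lTensor H (HopfAlgebra.antipode (R := K)) := by
    refine TensorProduct.ext' fun a b => ?_
    simp [← mul_assoc, (Semigroup.mem_center_iff.1 hz _).symm]
  change (LinearMap.mul' K H ∘ₗ map LinearMap.id
    (LinearMap.mulLeft K z ∘ₗ HopfAlgebra.antipode (R := K))) (comul h) = _
  rw [hcore, LinearMap.comp_apply, LinearMap.comp_apply,
    HopfAlgebra.mul_antipode_lTensor_comul_apply, LinearMap.mulRight_apply, Algebra.smul_def]

/-- `x z = Σ x₁ z S(x₂) x₃ = Σ Ad_z(x₁) x₂`, by coassociativity and `Σ S(x₁) x₂ = ε(x)`. -/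
theorem mem_center_of_sweedlerAd_apply {z : H}
    (hz : ∀ h : H, sweedlerAd K H z h = counit (R := K) h • z) : z ∈ Set.center H := by
  refine Semigroup.mem_center_iff.2 fun x => ?_
  set core : H ⊗[K] H →ₗ[K] H := LinearMap.mul' K H ∘ₗ
    map LinearMap.id (LinearMap.mulLeft K z ∘ₗ HopfAlgebra.antipode (R := K))
  have hAd : core ∘ₗ comul = LinearMap.toSpanSingleton K H z ∘ₗ counit :=
    LinearMap.ext fun h => by simp [core, ← hz h, sweedlerAd]
  set M : H ⊗[K] (H ⊗[K] H) →ₗ[K] H := LinearMap.mul' K H ∘ₗ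
    LinearMap.lTensor H (LinearMap.mulLeft K z ∘ₗ LinearMap.mul' K H ∘ₗ
      LinearMap.rTensor H (HopfAlgebra.antipode (R := K)))
  have hassoc : M ∘ₗ (TensorProduct.assoc K H H H).toLinearMap =
      LinearMap.mul' K H ∘ₗ LinearMap.rTensor H core :=
    TensorProduct.ext_threefold fun a b c => by simp [M, core, mul_assoc]
  have hleft : M (comul.lTensor H (comul x)) = x * z := by
    have hS : (LinearMap.mulLeft K z ∘ₗ LinearMap.mul' K H ∘ₗ
        LinearMap.rTensor H (HopfAlgebra.antipode (R := K))) ∘ₗ comul =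
        LinearMap.mulLeft K z ∘ₗ Algebra.linearMap K H ∘ₗ counit := by
      rw [LinearMap.comp_assoc, LinearMap.comp_assoc, HopfAlgebra.mul_antipode_rTensor_comul]
    rw [LinearMap.comp_apply, ← LinearMap.comp_apply (LinearMap.lTensor H _),
      ← LinearMap.lTensor_comp, hS, LinearMap.lTensor_comp, LinearMap.comp_apply,
      LinearMap.lTensor_comp, LinearMap.comp_apply, lTensor_counit_comul]
    simp
  have hright : (LinearMap.mul' K H ∘ₗ LinearMap.rTensor H core)
      (comul.rTensor H (comul x)) = z * x := by
    rw [LinearMap.comp_apply, ← LinearMap.comp_apply (core.rTensor H),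
      ← LinearMap.rTensor_comp, hAd, LinearMap.rTensor_comp, LinearMap.comp_apply,
      rTensor_counit_comul]
    simp
  calc x * z = M (comul.lTensor H (comul x)) := hleft.symm
    _ = M (TensorProduct.assoc K H H H (comul.rTensor H (comul x))) := by rw [coassoc_apply]
    _ = z * x := by rw [← hright, ← hassoc]; rfl

theorem sweedlerAd_eq_counit_smul_iff_mem_center {z : H} :
    (∀ h : H, sweedlerAd K H z h = counit (R := K) h • z) ↔ z ∈ Set.center H :=
  ⟨mem_center_of_sweedlerAd_apply, sweedlerAd_apply_of_mem_center⟩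

theorem eq_counit_of_smul_eq_sweedlerAd {γ : H →ₗ[K] K}
    (hγ : ∀ h x : H, γ (sweedlerAd K H x h) = counit (R := K) h * γ x)
    {z : H} (hz : γ z = 1) {f : H →ₗ[K] K} (hf : ∀ h : H, f h • z = sweedlerAd K H z h) :
    f = counit :=
  LinearMap.ext fun h => by simpa [hz, hγ] using congrArg γ (hf h)

end HopfAlgebra

theorem stmt2_general (K H : Type*) [Field K] [Ring H] [HopfAlgebra K H]
    (γ : H →ₗ[K] K) (hγ : IsAdInvariantIntegral K H γ)
    (N : ℕ)
    (g : H) (hg : IsGrouplike K H g)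
    (χ : H →ₐ[K] K)
    (hgN : g ^ N ≠ 1) :
    (∀ h : H, convPow K H χ.toLinearMap N h • (1 - g ^ N) =
        sweedlerAd K H (1 - g ^ N) h) ↔
      (convPow K H χ.toLinearMap N = Coalgebra.counit ∧ g ^ N ∈ Set.center H) := by
  obtain ⟨hγ1, hγleft, hγad⟩ := hγ
  have hγz : γ (1 - g ^ N) = 1 := by
    rw [map_sub, hγ1, apply_eq_zero_of_isGrouplike hγleft (hg.pow N) hgN, sub_zero]
  have one_sub_mem : ∀ a ∈ Set.center H, 1 - a ∈ Set.center H := fun _ ha =>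
    (Subring.center H).sub_mem (Subring.center H).one_mem ha
  have hcenter : g ^ N ∈ Set.center H ↔ 1 - g ^ N ∈ Set.center H :=
    ⟨one_sub_mem _, fun h => by simpa using one_sub_mem _ h⟩
  rw [hcenter, ← sweedlerAd_eq_counit_smul_iff_mem_center (K := K)]
  constructor
  · intro ha
    have hε := eq_counit_of_smul_eq_sweedlerAd hγad hγz ha
    exact ⟨hε, fun h => by rw [← ha h, hε]⟩
  · rintro ⟨hε, hz⟩ h
    rw [hε, hz]

/-- with an ad-invariant integral and `gᴺ ≠ 1`,
`χᴺ(h) • (1 − gᴺ) = Σ h₁ (1 − gᴺ) S(h₂)` for all `h` iff `χᴺ = ε` and `gᴺ` central. -/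
theorem stmt2 (K H : Type*) [Field K] [CharZero K] [Ring H] [HopfAlgebra K H]
    (γ : H →ₗ[K] K) (hγ : IsAdInvariantIntegral K H γ)
    (N : ℕ) (q : K) (hq : IsPrimitiveRoot q N)
    (g : H) (hg : IsGrouplike K H g)
    (χ : H →ₐ[K] K) (hχg : χ g = q)
    (hYD : ∀ h : H, g * phiMap K H χ h = psiMap K H χ h * g)
    (hgN : g ^ N ≠ 1) :
    (∀ h : H, convPow K H χ.toLinearMap N h • (1 - g ^ N) =
        sweedlerAd K H (1 - g ^ N) h) ↔
      (convPow K H χ.toLinearMap N = Coalgebra.counit ∧ g ^ N ∈ Set.center H) :=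
  stmt2_general K H γ hγ N g hg χ hgN
end

section
/- Let K be a field of characteristic 0, H a Hopf algebra, g ∈ H group-like with g^{N/2} central among the relevant elements, and x ∈ H satisfying Δ(x) = g^{N/2} ⊗ x + x ⊗ 1 and x g + g x = 0, where N/2 is even (so g^{N/2} x = x g^{N/2}). If H is finite dimensional, then x = λ (1 − g^{N/2}) for some λ ∈ K, and combining with x g + g x = 0 one obtains x g = 0 and hence x = 0. -/
open TensorProduct

/-! Since `m` is even, `c = g ^ m` commutes with `x`, so `Δ(xⁿ) = Σᵢ (n choose i) cⁱxⁿ⁻ⁱ ⊗ xⁱ`.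
Take `n` minimal with `xⁿ⁺¹ = a xⁿ + w`, `w` a combination of lower powers, and a functional `f`
killing `1, …, xⁿ⁻¹` but not `xⁿ`. Applying `id ⊗ f` to `Δ` of this relation gives
`cⁿ((n + 1)x + a c) = a cⁿ`, so `x = a / (n + 1) • (1 - c)`. As `1 - c` commutes with `g`,
`xg = gx = -xg`, whence `xg = 0` and `x = 0`. -/

section

open Finset

theorem psiL_pow_of_skewPrimitive {K H : Type*} [CommRing K] [Ring H] [Bialgebra K H] {c x : H}
    (hcx : Commute c x) (hx : Coalgebra.comul (R := K) x = c ⊗ₜ[K] x + x ⊗ₜ[K] 1)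
    (f : H →ₗ[K] K) (n : ℕ) :
    psiL K H f (x ^ n) = ∑ i ∈ range (n + 1), (n.choose i * f (x ^ i)) • (c ^ i * x ^ (n - i)) := by
  have hcomm : Commute (c ⊗ₜ[K] x) (x ⊗ₜ[K] (1 : H)) := by
    simp only [Commute, SemiconjBy, Algebra.TensorProduct.tmul_mul_tmul, mul_one, one_mul, hcx.eq]
  have hcomul : Coalgebra.comul (R := K) (x ^ n) = (c ⊗ₜ[K] x + x ⊗ₜ[K] (1 : H)) ^ n := by
    rw [← Bialgebra.comulAlgHom_apply, map_pow, Bialgebra.comulAlgHom_apply, hx]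
  simp only [psiL, LinearMap.coe_comp, Function.comp_apply, hcomul, hcomm.add_pow, map_sum]
  refine sum_congr rfl fun i _ => ?_
  rw [Algebra.TensorProduct.tmul_pow, Algebra.TensorProduct.tmul_pow,
    Algebra.TensorProduct.tmul_mul_tmul, one_pow, mul_one, ← Nat.cast_comm, ← nsmul_eq_mul,
    ← Nat.cast_smul_eq_nsmul K, map_smul, map_smul, TensorProduct.map_tmul, LinearEquiv.coe_coe,
    TensorProduct.rid_tmul, LinearMap.id_apply, smul_smul]

theorem psiL_pow_eq_zero_of_lt {K H : Type*} [CommRing K] [Ring H] [Bialgebra K H] {c x : H}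
    (hcx : Commute c x) (hx : Coalgebra.comul (R := K) x = c ⊗ₜ[K] x + x ⊗ₜ[K] 1)
    {f : H →ₗ[K] K} {n : ℕ} (hf : ∀ i < n, f (x ^ i) = 0) {k : ℕ} (hk : k < n) :
    psiL K H f (x ^ k) = 0 := by
  rw [psiL_pow_of_skewPrimitive hcx hx]
  exact sum_eq_zero fun i hi => by rw [hf i ((mem_range.mp hi).trans_le hk), mul_zero, zero_smul]

theorem exists_pow_notMem_span_lt_and_pow_succ_mem {K H : Type*} [Field K] [Ring H] [Algebra K H]
    [FiniteDimensional K H] [Nontrivial H] (x : H) :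
    ∃ n : ℕ, x ^ n ∉ Submodule.span K ((x ^ ·) '' ↑(range n)) ∧
      x ^ (n + 1) ∈ Submodule.span K ((x ^ ·) '' ↑(range (n + 1))) := by
  classical
  have hex : ∃ n : ℕ, x ^ n ∈ Submodule.span K ((x ^ ·) '' ↑(range n)) := by
    have hint : IsIntegral K x := .of_finite K x
    refine ⟨(minpoly K x).natDegree, ?_⟩
    have h := minpoly.aeval K x
    rw [Polynomial.aeval_eq_sum_range, sum_range_succ, (minpoly.monic hint).coeff_natDegree,
      one_smul, add_eq_zero_iff_neg_eq] at h
    rw [← h]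
    refine neg_mem (Submodule.sum_mem _ fun i hi => Submodule.smul_mem _ _ ?_)
    exact Submodule.subset_span ⟨i, hi, rfl⟩
  obtain ⟨n, hn⟩ : ∃ n, Nat.find hex = n + 1 := by
    refine Nat.exists_eq_add_one.mpr (Nat.pos_of_ne_zero fun h0 => ?_)
    have h := Nat.find_spec hex
    rw [h0] at h
    simp at h
  exact ⟨n, Nat.find_min hex (by omega), hn ▸ Nat.find_spec hex⟩

theorem exists_eq_smul_one_sub_of_skewPrimitive {K H : Type*} [Field K] [CharZero K] [Ring H]
    [Bialgebra K H] [FiniteDimensional K H] {c x : H} (hc : IsUnit c) (hcx : Commute c x)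
    (hx : Coalgebra.comul (R := K) x = c ⊗ₜ[K] x + x ⊗ₜ[K] 1) :
    ∃ lam : K, x = lam • (1 - c) := by
  rcases subsingleton_or_nontrivial H with hH | hH
  · exact ⟨0, Subsingleton.elim _ _⟩
  obtain ⟨n, hn, hn1⟩ := exists_pow_notMem_span_lt_and_pow_succ_mem (K := K) x
  rw [range_add_one, coe_insert, Set.image_insert_eq, Submodule.mem_span_insert] at hn1
  obtain ⟨a, w, hw, hxw⟩ := hn1
  obtain ⟨f, hfn, hfW⟩ := Submodule.exists_dual_map_eq_bot_of_notMem hn inferInstance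
  have hfW' : ∀ y ∈ Submodule.span K ((x ^ ·) '' ↑(range n)), f y = 0 := fun y hy =>
    (Submodule.mem_bot K).mp (hfW ▸ Submodule.mem_map_of_mem hy)
  have hf : ∀ i < n, f (x ^ i) = 0 := fun i hi =>
    hfW' _ (Submodule.subset_span ⟨i, mem_range.mpr hi, rfl⟩)
  have hψW : psiL K H f w = 0 := by
    refine (Submodule.span_le (p := LinearMap.ker (psiL K H f))).mpr ?_ hw
    rintro _ ⟨k, hk, rfl⟩
    exact psiL_pow_eq_zero_of_lt hcx hx hf (mem_range.mp hk)
  have hψn : psiL K H f (x ^ n) = f (x ^ n) • c ^ n := by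
    rw [psiL_pow_of_skewPrimitive hcx hx, sum_range_succ, sum_eq_zero, zero_add]
    · simp
    · intro i hi
      rw [hf i (mem_range.mp hi), mul_zero, zero_smul]
  have hψn1 : psiL K H f (x ^ (n + 1)) =
      f (x ^ n) • ((n + 1 : K) • (c ^ n * x) + a • c ^ (n + 1)) := by
    have hfn1 : f (x ^ (n + 1)) = a * f (x ^ n) := by
      rw [hxw, map_add, hfW' w hw, add_zero, map_smul, smul_eq_mul]
    rw [psiL_pow_of_skewPrimitive hcx hx, sum_range_succ, sum_range_succ, sum_eq_zero, zero_add]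
    · simp [hfn1, smul_add, smul_smul, mul_comm]
    · intro i hi
      rw [hf i (mem_range.mp hi), mul_zero, zero_smul]
  have hkey : c ^ n * ((n + 1 : K) • x - a • (1 - c)) = 0 := by
    have h := congrArg (psiL K H f) hxw
    rw [hψn1, map_add, map_smul, hψn, hψW, add_zero, smul_comm] at h
    have h' := smul_right_injective H hfn h
    rw [mul_sub, mul_smul_comm, mul_smul_comm, mul_sub, mul_one, smul_sub, ← pow_succ, ← h']
    abel
  have hn0 : (n + 1 : K) ≠ 0 := by exact_mod_cast n.succ_ne_zero
  refine ⟨(n + 1 : K)⁻¹ * a, ?_⟩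
  rw [(hc.pow n).mul_right_eq_zero, sub_eq_zero] at hkey
  rw [mul_smul, ← hkey, smul_smul, inv_mul_cancel₀ hn0, one_smul]

theorem commute_pow_of_even_of_mul_add_mul_eq_zero {R : Type*} [Ring R] {g x : R}
    (h : x * g + g * x = 0) {m : ℕ} (hm : Even m) : Commute (g ^ m) x := by
  have hg2 : Commute (g ^ 2) x := by
    have hgx : g * x = -(x * g) := eq_neg_of_add_eq_zero_right h
    rw [Commute, SemiconjBy, sq, mul_assoc, hgx, mul_neg, ← mul_assoc, hgx, neg_mul, neg_neg,
      mul_assoc]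
  obtain ⟨k, rfl⟩ := hm
  rw [← two_mul, pow_mul]
  exact hg2.pow_left k

end

theorem stmt5_general (K H : Type*) [Field K] [CharZero K] [Ring H] [HopfAlgebra K H]
    [FiniteDimensional K H]
    (g : H) (hgu : IsUnit g)
    (m : ℕ) (hm : Even m)
    (x : H)
    (hΔx : Coalgebra.comul (R := K) x = (g ^ m) ⊗ₜ[K] x + x ⊗ₜ[K] 1)
    (hanti : x * g + g * x = 0) :
    (∃ lam : K, x = lam • (1 - g ^ m)) ∧ x * g = 0 ∧ x = 0 := by
  obtain ⟨lam, hlam⟩ := exists_eq_smul_one_sub_of_skewPrimitive (hgu.pow m)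
    (commute_pow_of_even_of_mul_add_mul_eq_zero hanti hm) hΔx
  have hxg : x * g = 0 := by
    have hcomm : x * g = g * x := by
      rw [hlam, smul_mul_assoc, mul_smul_comm, ((Commute.one_left g).sub_left
        ((Commute.refl g).pow_left m)).eq]
    rw [← hcomm, ← two_smul K, smul_eq_zero] at hanti
    exact hanti.resolve_left two_ne_zero
  exact ⟨⟨lam, hlam⟩, hxg, hgu.mul_left_eq_zero.mp hxg⟩

/-- in a finite dimensional Hopf algebra (char 0), a
`(gᵐ,1)`-skew-primitive `x` with `m` even and `xg + gx = 0` satisfies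
`x = λ(1 − gᵐ)`, `xg = 0` and `x = 0`. -/
theorem stmt5 (K H : Type*) [Field K] [CharZero K] [Ring H] [HopfAlgebra K H]
    [FiniteDimensional K H]
    (g : H) (hg : IsGrouplike K H g) (hgu : IsUnit g)
    (m : ℕ) (hm : Even m)
    (x : H)
    (hΔx : Coalgebra.comul (R := K) x = (g ^ m) ⊗ₜ[K] x + x ⊗ₜ[K] 1)
    (hanti : x * g + g * x = 0) :
    (∃ lam : K, x = lam • (1 - g ^ m)) ∧ x * g = 0 ∧ x = 0 :=
  stmt5_general K H g hgu m hm x hΔx hanti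
end

section
/- Let H be a cosemisimple Hopf algebra over K with total integral λ ∈ H* (λ(1) = 1 and (id ⊗ λ)∘Δ = λ(·)·1), let c ∈ H be group-like, and let x ∈ H satisfy Δ(x) = c ⊗ x + x ⊗ 1 and x c + c x = 0. Then x = 0. -/
open TensorProduct

/-! Applying `id ⊗ λ` to `Δx = c ⊗ x + x ⊗ 1` gives `x = λ(x)(1 - c)`. Hence `x` commutes with `c`,
the relation `xc + cx = 0` becomes `2cx = 0`, and `x = 0` because `2` and `c` are invertible. -/

theorem psiL_apply_of_comul_eq {K H : Type*} [CommRing K] [Ring H] [Bialgebra K H]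
    (f : H →ₗ[K] K) {c x : H} (hΔx : Coalgebra.comul (R := K) x = c ⊗ₜ[K] x + x ⊗ₜ[K] 1) :
    psiL K H f x = f x • c + f 1 • x := by
  simp only [psiL, LinearMap.coe_comp, Function.comp_apply, hΔx, map_add,
    TensorProduct.map_tmul, LinearMap.id_coe, id_eq, LinearEquiv.coe_coe, TensorProduct.rid_tmul]

theorem eq_smul_one_sub_of_comul_eq {K H : Type*} [CommRing K] [Ring H] [Bialgebra K H]
    {lam : H →ₗ[K] K} (hlam1 : lam 1 = 1) (hlam : ∀ h : H, psiL K H lam h = lam h • (1 : H))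
    {c x : H} (hΔx : Coalgebra.comul (R := K) x = c ⊗ₜ[K] x + x ⊗ₜ[K] 1) :
    x = lam x • (1 - c) := by
  have h := hlam x
  rw [psiL_apply_of_comul_eq lam hΔx, hlam1, one_smul] at h
  rw [smul_sub, ← h, add_sub_cancel_left]

theorem eq_zero_of_commute_of_mul_add_mul_eq_zero {K H : Type*} [Field K] [CharZero K] [Ring H]
    [Module K H] {c x : H} (hcu : IsUnit c) (hcomm : Commute x c) (hanti : x * c + c * x = 0) :
    x = 0 := by
  rw [hcomm.eq] at hanti
  have h2 : (2 : K) • (c * x) = 0 := by rwa [two_smul]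
  rwa [smul_eq_zero, or_iff_right two_ne_zero, hcu.mul_right_eq_zero] at h2

theorem stmt6_general (K H : Type*) [Field K] [CharZero K] [Ring H] [HopfAlgebra K H]
    (lam : H →ₗ[K] K) (hlam1 : lam 1 = 1)
    (hlam : ∀ h : H, psiL K H lam h = lam h • (1 : H))
    (c : H) (hcu : IsUnit c)
    (x : H)
    (hΔx : Coalgebra.comul (R := K) x = c ⊗ₜ[K] x + x ⊗ₜ[K] 1)
    (hanti : x * c + c * x = 0) :
    x = 0 := by
  have hx : x = lam x • (1 - c) := eq_smul_one_sub_of_comul_eq hlam1 hlam hΔx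
  have hcomm : Commute x c := by
    rw [hx]
    exact ((Commute.one_left c).sub_left (Commute.refl c)).smul_left _
  exact eq_zero_of_commute_of_mul_add_mul_eq_zero (K := K) hcu hcomm hanti

/-- if `H` is cosemisimple (has a total integral `λ`), `c` group-like,
`Δ(x) = c ⊗ x + x ⊗ 1` and `xc + cx = 0`, then `x = 0` (char 0). -/
theorem stmt6 (K H : Type*) [Field K] [CharZero K] [Ring H] [HopfAlgebra K H]
    (lam : H →ₗ[K] K) (hlam1 : lam 1 = 1)
    (hlam : ∀ h : H, psiL K H lam h = lam h • (1 : H))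
    (c : H) (hc : IsGrouplike K H c) (hcu : IsUnit c)
    (x : H)
    (hΔx : Coalgebra.comul (R := K) x = c ⊗ₜ[K] x + x ⊗ₜ[K] 1)
    (hanti : x * c + c * x = 0) :
    x = 0 :=
  stmt6_general K H lam hlam1 hlam c hcu x hΔx hanti
end

section
/- In the 72-dimensional Hopf algebra A generated by Γ, X, Y with relations Γ⁶ = 1, X² = 0, Y⁶ = 0, ΓY = qYΓ, XY = −YX, ΓX = −XΓ (q a primitive 6-th root of unity), Δ(Y) = Y ⊗ 1 + Γ ⊗ Y, Δ(X) = Γ³ ⊗ X + X ⊗ 1, Δ(Γ) = Γ ⊗ Γ, the elements zₙ := Yⁿ − binom(n,3)_q Y^{n−3} X (for 0 ≤ n ≤ 5, with the convention that the second term is 0 for n < 3) satisfy: z₀ = 1, z₁ = Y, z₂ = Y², z₃ = Y³ − X, and zₙ · z₁-recursion: the n-th power of z₁ = Y computed via the twisted multiplication r ·_R s := Σ r₍₁₎ s₍₁₎ σSπ(r₍₂₎s₍₂₎) (with π the H-bilinear coalgebra projection sending Y^i h ↦ δ_{i,0} h + δ_{i,3} X h for h in the Hopf subalgebra H generated by Γ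 and X) equals zₙ. In particular the 4-th power of Y in R differs from Y⁴ in A: z₄ = Y⁴ − (2q−1) Y X ≠ Y⁴. -/
open TensorProduct

/-- `τ(a) = Σ a₁ * S(π(a₂))`. -/
noncomputable def tauMap (K A : Type*) [CommRing K] [Ring A] [HopfAlgebra K A]
    (π : A →ₗ[K] A) : A →ₗ[K] A :=
  LinearMap.mul' K A ∘ₗ
    TensorProduct.map LinearMap.id
      (HopfAlgebra.antipode (R := K) ∘ₗ π) ∘ₗ Coalgebra.comul

/-- Iterated powers of `y` under the twisted multiplication `r ·_R s := τ(r ·_A s)`. -/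
noncomputable def powR (K A : Type*) [CommRing K] [Ring A] [HopfAlgebra K A]
    (π : A →ₗ[K] A) (y : A) : ℕ → A
  | 0 => 1
  | 1 => y
  | n + 2 => tauMap K A π (powR K A π y (n + 1) * y)

/-- The coaction `ρ(r) = Σ π(r₁) ⊗ r₂`. -/
noncomputable def rhoMap (K A : Type*) [CommRing K] [Ring A] [HopfAlgebra K A]
    (π : A →ₗ[K] A) : A →ₗ[K] A ⊗[K] A :=
  TensorProduct.map π LinearMap.id ∘ₗ Coalgebra.comul


/-!
`Δ(Yⁿ) = (Y ⊗ 1 + Γ ⊗ Y)ⁿ` expands by the q-binomial theorem, since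
`(Γ ⊗ Y)(Y ⊗ 1) = q (Y ⊗ 1)(Γ ⊗ Y)`. As `π(Yᵏ)` vanishes unless `k = 0` or `k = 3`, only two
terms of `τ(Yⁿ)` survive: `Yⁿ` and `binom(n,3)_q Yⁿ⁻³ Γ³ S(X) = -binom(n,3)_q Yⁿ⁻³ X`, because
`Γ³ S(X) + X = ε(X) = 0`. For `m ≤ 2` the same expansion gives `τ(Yᵐ X) = Yᵐ (Γ³ S(X) + X) = 0`,
so with `XY = -YX` the recursion `z_{n+1} = τ(zₙ Y)` reproduces the formula. Finally
`binom(4,3)_q = 1 + q + q² + q³ = 2q - 1`, which is nonzero for a primitive sixth root of unity.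
-/

open Finset

section QBinomial

variable {K : Type*} [CommRing K] {q : K}

theorem qBinom_eq_zero_of_lt {n k : ℕ} (h : n < k) : qBinom q n k = 0 := by
  induction n generalizing k with
  | zero => obtain ⟨k, rfl⟩ := Nat.exists_eq_succ_of_ne_zero (by omega : k ≠ 0); rfl
  | succ n ih =>
    obtain ⟨k, rfl⟩ := Nat.exists_eq_succ_of_ne_zero (by omega : k ≠ 0)
    simp only [qBinom, ih (by omega : n < k), ih (by omega : n < k + 1), mul_zero, add_zero]

theorem pow_mul_eq_smul_mul_pow {B : Type*} [Semiring B] [Algebra K B] {a b : B}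
    (h : b * a = q • (a * b)) (k : ℕ) : b ^ k * a = q ^ k • (a * b ^ k) := by
  induction k with
  | zero => simp
  | succ k ih =>
    rw [pow_succ, mul_assoc, h, mul_smul_comm, ← mul_assoc, ih, smul_mul_assoc, smul_smul,
      ← pow_succ', mul_assoc, ← pow_succ]

theorem add_pow_eq_sum_qBinom {B : Type*} [Semiring B] [Algebra K B] {a b : B}
    (h : b * a = q • (a * b)) (n : ℕ) :
    (a + b) ^ n = ∑ k ∈ range (n + 1), qBinom q n k • (a ^ (n - k) * b ^ k) := by
  induction n with
  | zero => simp [qBinom]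
  | succ n ih =>
    have hright : ∀ k ∈ range (n + 1), qBinom q n k • (a ^ (n - k) * b ^ k) * a =
        (q ^ k * qBinom q n k) • (a ^ (n + 1 - k) * b ^ k) := fun k hk => by
      rw [smul_mul_assoc, mul_assoc, pow_mul_eq_smul_mul_pow h, mul_smul_comm, ← mul_assoc,
        ← pow_succ, smul_smul, mul_comm, Nat.sub_add_comm (by simpa [Nat.lt_succ_iff] using hk)]
    rw [pow_succ, ih, mul_add, sum_mul, sum_mul, sum_congr rfl hright, sum_range_succ' _ (n + 1),
      sum_range_succ' (fun k => (q ^ k * qBinom q n k) • _)]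
    simp only [qBinom, add_smul, sum_add_distrib, smul_mul_assoc, mul_assoc, ← pow_succ]
    rw [sum_range_succ (fun k => (q ^ (k + 1) * qBinom q n (k + 1)) • _), qBinom_eq_zero_of_lt
      (Nat.lt_succ_self n)]
    simp only [Nat.succ_sub_succ, pow_zero, mul_one, one_smul, mul_zero, zero_smul, add_zero,
      Nat.sub_zero]
    abel

end QBinomial

section HopfComputations

open TensorProduct Coalgebra HopfAlgebra

variable {K A : Type*} [CommRing K] [Ring A] {q : K} {g y : A}

theorem comul_pow_eq_sum_qBinom [Bialgebra K A] (hgy : g * y = q • (y * g))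
    (hy : comul (R := K) y = y ⊗ₜ[K] 1 + g ⊗ₜ[K] y) (n : ℕ) :
    comul (R := K) (y ^ n) =
      ∑ k ∈ range (n + 1), qBinom q n k • ((y ^ (n - k) * g ^ k) ⊗ₜ[K] (y ^ k)) := by
  have hcomm : (g ⊗ₜ[K] y) * (y ⊗ₜ[K] (1 : A)) = q • ((y ⊗ₜ[K] 1) * (g ⊗ₜ[K] y)) := by
    simp only [Algebra.TensorProduct.tmul_mul_tmul, hgy, mul_one, one_mul, smul_tmul']
  rw [show comul (R := K) (y ^ n) = comul y ^ n from map_pow (Bialgebra.comulAlgHom K A) y n,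
    hy, add_pow_eq_sum_qBinom hcomm]
  simp only [Algebra.TensorProduct.tmul_pow, one_pow, Algebra.TensorProduct.tmul_mul_tmul,
    one_mul]

theorem mul_antipode_add_self_eq_zero [HopfAlgebra K A] {h x : A}
    (hx : comul (R := K) x = h ⊗ₜ[K] x + x ⊗ₜ[K] 1) (hεx : counit (R := K) x = 0) :
    h * antipode K x + x = 0 := by
  simpa [hx, hεx] using mul_antipode_lTensor_comul_apply (R := K) x

variable [HopfAlgebra K A] (π : A →ₗ[K] A)

theorem tauMap_pow_eq_sum (hgy : g * y = q • (y * g))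
    (hy : comul (R := K) y = y ⊗ₜ[K] 1 + g ⊗ₜ[K] y) (n : ℕ) :
    tauMap K A π (y ^ n) =
      ∑ k ∈ range (n + 1), qBinom q n k • (y ^ (n - k) * g ^ k * antipode K (π (y ^ k))) := by
  simp only [tauMap, LinearMap.comp_apply, comul_pow_eq_sum_qBinom hgy hy, map_sum, map_smul,
    map_tmul, LinearMap.id_apply, LinearMap.mul'_apply]

theorem tauMap_pow_mul_eq_sum (hgy : g * y = q • (y * g))
    (hy : comul (R := K) y = y ⊗ₜ[K] 1 + g ⊗ₜ[K] y) {h x : A}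
    (hx : comul (R := K) x = h ⊗ₜ[K] x + x ⊗ₜ[K] 1) (m : ℕ) :
    tauMap K A π (y ^ m * x) =
      ∑ k ∈ range (m + 1), qBinom q m k • (y ^ (m - k) * g ^ k * h * antipode K (π (y ^ k * x))
        + y ^ (m - k) * g ^ k * x * antipode K (π (y ^ k))) := by
  simp only [tauMap, LinearMap.comp_apply, Bialgebra.comul_mul, comul_pow_eq_sum_qBinom hgy hy,
    hx, sum_mul, smul_mul_assoc, mul_add, Algebra.TensorProduct.tmul_mul_tmul, mul_one, map_sum,
    map_add, map_smul, map_tmul, LinearMap.id_apply, LinearMap.mul'_apply, smul_add,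
    sum_add_distrib]

theorem tauMap_pow_of_apply_pow (hgy : g * y = q • (y * g))
    (hy : comul (R := K) y = y ⊗ₜ[K] 1 + g ⊗ₜ[K] y) (x : A) (n : ℕ)
    (hπ : ∀ k ≤ n, π (y ^ k) = (if k = 0 then 1 else 0) + (if k = 3 then x else 0)) :
    tauMap K A π (y ^ n) = y ^ n + qBinom q n 3 • (y ^ (n - 3) * g ^ 3 * antipode K x) := by
  have hSπ : ∀ k ∈ range (n + 1), antipode K (π (y ^ k)) =
      (if k = 0 then 1 else 0) + (if k = 3 then antipode K x else 0) := fun k hk => by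
    rw [hπ k (Nat.lt_succ_iff.mp (mem_range.mp hk))]
    split_ifs <;> simp
  rw [tauMap_pow_eq_sum π hgy hy, sum_congr rfl fun k hk => by rw [hSπ k hk]]
  simp only [mul_add, mul_ite, mul_one, mul_zero, smul_add, smul_ite, smul_zero, sum_add_distrib,
    sum_ite_eq', mem_range]
  by_cases h3 : 3 < n + 1
  · simp [h3, qBinom]
  · simp [h3, qBinom, qBinom_eq_zero_of_lt (by omega : n < 3)]

theorem tauMap_pow_mul_eq_zero (hgy : g * y = q • (y * g))
    (hy : comul (R := K) y = y ⊗ₜ[K] 1 + g ⊗ₜ[K] y) {h x : A}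
    (hx : comul (R := K) x = h ⊗ₜ[K] x + x ⊗ₜ[K] 1) (hεx : counit (R := K) x = 0) (m : ℕ)
    (hπ : ∀ k ≤ m, π (y ^ k) = if k = 0 then 1 else 0)
    (hπx : ∀ k ≤ m, π (y ^ k * x) = if k = 0 then x else 0) :
    tauMap K A π (y ^ m * x) = 0 := by
  have hterm : ∀ k ∈ range (m + 1),
      qBinom q m k • (y ^ (m - k) * g ^ k * h * antipode K (π (y ^ k * x))
        + y ^ (m - k) * g ^ k * x * antipode K (π (y ^ k))) =
      if k = 0 then y ^ m * (h * antipode K x + x) else 0 := fun k hk => by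
    have hk := Nat.lt_succ_iff.mp (mem_range.mp hk)
    rw [hπ k hk, hπx k hk]
    split_ifs with h0
    · simp [h0, qBinom, mul_add, mul_assoc]
    · simp
  rw [tauMap_pow_mul_eq_sum π hgy hy hx, sum_congr rfl hterm, sum_ite_eq', if_pos (by simp),
    mul_antipode_add_self_eq_zero hx hεx, mul_zero]

end HopfComputations

theorem powR_eq_sub_qBinom_smul {K A : Type*} [CommRing K] [Ring A] [HopfAlgebra K A]
    (π : A →ₗ[K] A) {q : K} {x y : A} (N : ℕ) (hxy : x * y = -(y * x))
    (hτ : ∀ n ≤ N, tauMap K A π (y ^ n) = y ^ n - qBinom q n 3 • (y ^ (n - 3) * x))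
    (hτx : ∀ m, m + 3 ≤ N → tauMap K A π (y ^ m * x) = 0) :
    ∀ n ≤ N, powR K A π y n = y ^ n - qBinom q n 3 • (y ^ (n - 3) * x) := by
  intro n hn
  induction n with
  | zero => simp [powR, qBinom]
  | succ n ih =>
    cases n with
    | zero => simp [powR, qBinom]
    | succ n =>
      rw [powR, ih (by omega)]
      by_cases hn3 : n + 1 < 3
      · rw [qBinom_eq_zero_of_lt hn3, zero_smul, sub_zero, ← pow_succ, hτ _ hn]
      · obtain ⟨m, rfl⟩ : ∃ m, n = m + 2 := ⟨n - 2, by omega⟩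
        have hshift : (y ^ (m + 3) - qBinom q (m + 3) 3 • (y ^ m * x)) * y =
            y ^ (m + 4) + qBinom q (m + 3) 3 • (y ^ (m + 1) * x) := by
          rw [sub_mul, smul_mul_assoc, mul_assoc, hxy, mul_neg, ← mul_assoc, ← pow_succ,
            ← pow_succ, smul_neg, sub_neg_eq_add]
        rw [show m + 2 + 1 - 3 = m by omega, hshift, map_add, map_smul, hτ _ hn,
          hτx (m + 1) (by omega), smul_zero, add_zero]

namespace IsPrimitiveRoot

variable {K : Type*} [CommRing K] [IsDomain K] {q : K}

theorem pow_three_eq_neg_one (hq : IsPrimitiveRoot q 6) : q ^ 3 = -1 :=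
  (hq.pow_of_dvd (by norm_num) (by norm_num : 3 ∣ 6)).eq_neg_one_of_two_right

theorem sq_eq_sub_one (hq : IsPrimitiveRoot q 6) : q ^ 2 = q - 1 := by
  have hq1 : q + 1 ≠ 0 := fun h => hq.pow_ne_one_of_pos_of_lt (l := 2) two_ne_zero (by norm_num)
    (by rw [eq_neg_of_add_eq_zero_left h]; norm_num)
  have hfac : (q + 1) * (q ^ 2 - q + 1) = 0 := by linear_combination hq.pow_three_eq_neg_one
  linear_combination (mul_eq_zero.mp hfac).resolve_left hq1

theorem qBinom_four_three (hq : IsPrimitiveRoot q 6) : qBinom q 4 3 = 2 * q - 1 := by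
  simp only [qBinom, zero_add, pow_one, mul_zero, add_zero, mul_one, Nat.reduceAdd]
  linear_combination hq.sq_eq_sub_one + hq.pow_three_eq_neg_one

theorem two_mul_sub_one_ne_zero [CharZero K] (hq : IsPrimitiveRoot q 6) : 2 * q - 1 ≠ 0 := by
  intro h
  have h3 : (3 : K) = 0 := by linear_combination 4 * hq.sq_eq_sub_one + (1 - 2 * q) * h
  norm_num at h3

end IsPrimitiveRoot

theorem stmt16_general
    (K A : Type*) [Field K] [CharZero K] [Ring A] [HopfAlgebra K A]
    (q : K) (hq : IsPrimitiveRoot q 6)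
    (Γ X Y : A)
    (hind : LinearIndependent K (fun p : Fin 6 × Fin 2 × Fin 6 =>
      Y ^ (p.1 : ℕ) * X ^ (p.2.1 : ℕ) * Γ ^ (p.2.2 : ℕ)))
    (hΓY : Γ * Y = q • (Y * Γ)) (hXY : X * Y = -(Y * X))
    (hΔX : Coalgebra.comul (R := K) X = (Γ ^ 3) ⊗ₜ[K] X + X ⊗ₜ[K] 1)
    (hΔY : Coalgebra.comul (R := K) Y = Y ⊗ₜ[K] 1 + Γ ⊗ₜ[K] Y)
    (hεX : Coalgebra.counit (R := K) X = 0)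
    (π : A →ₗ[K] A)
    (hπ : ∀ h ∈ Algebra.adjoin K ({Γ, X} : Set A), ∀ i : ℕ, i ≤ 5 →
      π (Y ^ i * h) = (if i = 0 then h else 0) + (if i = 3 then X * h else 0))
    :
    powR K A π Y 0 = 1 ∧ powR K A π Y 1 = Y ∧ powR K A π Y 2 = Y ^ 2 ∧
    powR K A π Y 3 = Y ^ 3 - X ∧
    (∀ n : ℕ, n ≤ 5 →
      powR K A π Y n = Y ^ n - qBinom q n 3 • (Y ^ (n - 3) * X)) ∧
    powR K A π Y 4 = Y ^ 4 - (2 * q - 1) • (Y * X) ∧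
    powR K A π Y 4 ≠ Y ^ 4 := by
  have hπY (k : ℕ) (hk : k ≤ 5) :
      π (Y ^ k) = (if k = 0 then 1 else 0) + (if k = 3 then X else 0) := by
    simpa using hπ 1 (one_mem _) k hk
  have hπYX (k : ℕ) (hk : k ≤ 2) : π (Y ^ k * X) = if k = 0 then X else 0 := by
    simpa [show k ≠ 3 by omega] using hπ X (Algebra.subset_adjoin (by simp)) k (by omega)
  have hτ (n : ℕ) (hn : n ≤ 5) :
      tauMap K A π (Y ^ n) = Y ^ n - qBinom q n 3 • (Y ^ (n - 3) * X) := by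
    rw [tauMap_pow_of_apply_pow π hΓY hΔY X n fun k hk => hπY k (hk.trans hn), mul_assoc,
      eq_neg_of_add_eq_zero_left (mul_antipode_add_self_eq_zero hΔX hεX), mul_neg, smul_neg,
      sub_eq_add_neg]
  have hτX (m : ℕ) (hm : m + 3 ≤ 5) : tauMap K A π (Y ^ m * X) = 0 :=
    tauMap_pow_mul_eq_zero π hΓY hΔY hΔX hεX m
      (fun k hk => by simpa [show k ≠ 3 by omega] using hπY k (by omega))
      (fun k hk => hπYX k (by omega))
  have hpow := powR_eq_sub_qBinom_smul π 5 hXY hτ hτX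
  have hpow4 : powR K A π Y 4 = Y ^ 4 - (2 * q - 1) • (Y * X) := by
    rw [hpow 4 (by norm_num), hq.qBinom_four_three, pow_one]
  have hYX : Y * X ≠ 0 := by simpa using hind.ne_zero ((1 : Fin 6), (1 : Fin 2), (0 : Fin 6))
  refine ⟨rfl, rfl, ?_, ?_, hpow, hpow4, ?_⟩
  · simpa [qBinom_eq_zero_of_lt] using hpow 2 (by norm_num)
  · simpa [qBinom] using hpow 3 (by norm_num)
  · rw [hpow4, Ne, sub_eq_self, smul_eq_zero, not_or]
    exact ⟨hq.two_mul_sub_one_ne_zero, hYX⟩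

/-- in the 72-dimensional Hopf algebra, the `n`-th powers of
`y = Y` for the twisted multiplication `r ·_R s = τ(rs)` are
`zₙ = Yⁿ − binom(n,3)_q Y^{n−3} X`; in particular the fourth power in `R` is
`Y⁴ − (2q−1)YX ≠ Y⁴`. -/
theorem stmt16
    (K A : Type*) [Field K] [CharZero K] [Ring A] [HopfAlgebra K A]
    (q : K) (hq : IsPrimitiveRoot q 6)
    (Γ X Y : A)
    (hind : LinearIndependent K (fun p : Fin 6 × Fin 2 × Fin 6 =>
      Y ^ (p.1 : ℕ) * X ^ (p.2.1 : ℕ) * Γ ^ (p.2.2 : ℕ)))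
    (hΓ6 : Γ ^ 6 = 1) (hX2 : X ^ 2 = 0) (hY6 : Y ^ 6 = 0)
    (hΓY : Γ * Y = q • (Y * Γ)) (hXY : X * Y = -(Y * X)) (hΓX : Γ * X = -(X * Γ))
    (hΔΓ : Coalgebra.comul (R := K) Γ = Γ ⊗ₜ[K] Γ)
    (hΔX : Coalgebra.comul (R := K) X = (Γ ^ 3) ⊗ₜ[K] X + X ⊗ₜ[K] 1)
    (hΔY : Coalgebra.comul (R := K) Y = Y ⊗ₜ[K] 1 + Γ ⊗ₜ[K] Y)
    (hεΓ : Coalgebra.counit (R := K) Γ = 1)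
    (hεX : Coalgebra.counit (R := K) X = 0)
    (hεY : Coalgebra.counit (R := K) Y = 0)
    (π : A →ₗ[K] A)
    (hπ : ∀ h ∈ Algebra.adjoin K ({Γ, X} : Set A), ∀ i : ℕ, i ≤ 5 →
      π (Y ^ i * h) = (if i = 0 then h else 0) + (if i = 3 then X * h else 0))
    :
    powR K A π Y 0 = 1 ∧ powR K A π Y 1 = Y ∧ powR K A π Y 2 = Y ^ 2 ∧
    powR K A π Y 3 = Y ^ 3 - X ∧
    (∀ n : ℕ, n ≤ 5 →
      powR K A π Y n = Y ^ n - qBinom q n 3 • (Y ^ (n - 3) * X)) ∧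
    powR K A π Y 4 = Y ^ 4 - (2 * q - 1) • (Y * X) ∧
    powR K A π Y 4 ≠ Y ^ 4 :=
  stmt16_general K A q hq Γ X Y hind hΓY hXY hΔX hΔY hεX π hπ
end

section
/- In the 72-dimensional Hopf algebra A of the previous examples, the cocycle ξ : R ⊗ R → H defined by ξ(r ⊗ s) = π(r ·_A s) satisfies ξ(y ⊗ y²) = X ≠ ε(y)ε(y²)·1, where y = Y and y² = Y². In particular ξ is non-trivial, so π is not an algebra homomorphism and A is not the Radford–Majid bosonization of R over H via π. -/
open TensorProduct

theorem stmt18_general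
    (K A : Type*) [Field K] [Ring A] [HopfAlgebra K A]
    (Γ X Y : A)
    (hind : LinearIndependent K (fun p : Fin 6 × Fin 2 × Fin 6 =>
      Y ^ (p.1 : ℕ) * X ^ (p.2.1 : ℕ) * Γ ^ (p.2.2 : ℕ)))
    (hεY : Coalgebra.counit (R := K) Y = 0)
    (π : A →ₗ[K] A)
    (hπ : ∀ h ∈ Algebra.adjoin K ({Γ, X} : Set A), ∀ i : ℕ, i ≤ 5 →
      π (Y ^ i * h) = (if i = 0 then h else 0) + (if i = 3 then X * h else 0))
    :
    π (Y * Y ^ 2) = X ∧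
    π (Y * Y ^ 2) ≠
      (Coalgebra.counit (R := K) Y * Coalgebra.counit (R := K) (Y ^ 2)) •
        (1 : A) := by
  have hπY3 : π (Y * Y ^ 2) = X := by
    simpa [← pow_succ'] using hπ 1 (Subalgebra.one_mem _) 3 (by norm_num)
  have hX : X ≠ 0 := by
    simpa using hind.ne_zero ((0 : Fin 6), (1 : Fin 2), (0 : Fin 6))
  refine ⟨hπY3, ?_⟩
  rwa [hπY3, hεY, zero_mul, zero_smul]

/-- the cocycle `ξ(r ⊗ s) = π(r ·_A s)` satisfies
`ξ(y ⊗ y²) = π(Y·Y²) = X ≠ ε(y)ε(y²)·1`; in particular `ξ` is non-trivial. -/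
theorem stmt18
    (K A : Type*) [Field K] [CharZero K] [Ring A] [HopfAlgebra K A]
    (q : K) (hq : IsPrimitiveRoot q 6)
    (Γ X Y : A)
    (hind : LinearIndependent K (fun p : Fin 6 × Fin 2 × Fin 6 =>
      Y ^ (p.1 : ℕ) * X ^ (p.2.1 : ℕ) * Γ ^ (p.2.2 : ℕ)))
    (hΓ6 : Γ ^ 6 = 1) (hX2 : X ^ 2 = 0) (hY6 : Y ^ 6 = 0)
    (hΓY : Γ * Y = q • (Y * Γ)) (hXY : X * Y = -(Y * X)) (hΓX : Γ * X = -(X * Γ))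
    (hΔΓ : Coalgebra.comul (R := K) Γ = Γ ⊗ₜ[K] Γ)
    (hΔX : Coalgebra.comul (R := K) X = (Γ ^ 3) ⊗ₜ[K] X + X ⊗ₜ[K] 1)
    (hΔY : Coalgebra.comul (R := K) Y = Y ⊗ₜ[K] 1 + Γ ⊗ₜ[K] Y)
    (hεΓ : Coalgebra.counit (R := K) Γ = 1)
    (hεX : Coalgebra.counit (R := K) X = 0)
    (hεY : Coalgebra.counit (R := K) Y = 0)
    (π : A →ₗ[K] A)
    (hπ : ∀ h ∈ Algebra.adjoin K ({Γ, X} : Set A), ∀ i : ℕ, i ≤ 5 →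
      π (Y ^ i * h) = (if i = 0 then h else 0) + (if i = 3 then X * h else 0))
    :
    π (Y * Y ^ 2) = X ∧
    π (Y * Y ^ 2) ≠
      (Coalgebra.counit (R := K) Y * Coalgebra.counit (R := K) (Y ^ 2)) •
        (1 : A) :=
  stmt18_general K A Γ X Y hind hεY π hπ
end
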